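/- arXiv:0811.0436 — 3 statements merged into one kernel-verified Lean document; each statement's English description precedes it below -/
import Mathlib

section
/- Every closed PGA term is derivably equal, using axioms PGA1–PGA4, to a term of the form P or P ; Q*, where P and Q are closed PGA terms in which the repetition operator does not occur (first canonical form). -/
/-- Single-pass instruction sequences: terms of program algebra (PGA) over a set
`I` of primitive instructions, built from instruction constants, concatenation `;`
and repetition `*`. -/
inductive PGA (I : Type) : Type
  | ins : I → PGA I
  | conc : PGA I → PGA I → PGA I
  | rep : PGA I → PGA I

namespace PGA

variable {I : Type}

/-- `pow X n` is `X^n` for `n ≥ 1` (with `pow X 0` defined as `X`, a junk value):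
`X^1 = X` and `X^(n+1) = X ; X^n`. -/
def pow (X : PGA I) : ℕ → PGA I
  | 0 => X
  | 1 => X
  | n + 2 => conc X (pow X (n + 1))

/-- Derivable equality of PGA terms from the axioms PGA1–PGA4 (closed under
equational logic). -/
inductive Eq : PGA I → PGA I → Prop
  | refl (x : PGA I) : Eq x x
  | symm {x y : PGA I} : Eq x y → Eq y x
  | trans {x y z : PGA I} : Eq x y → Eq y z → Eq x z
  | concCongr {x x' y y' : PGA I} : Eq x x' → Eq y y' → Eq (conc x y) (conc x' y')
  | repCongr {x x' : PGA I} : Eq x x' → Eq (rep x) (rep x')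
  | pga1 (x y z : PGA I) : Eq (conc (conc x y) z) (conc x (conc y z))
  | pga2 (x : PGA I) (n : ℕ) (h : 1 ≤ n) : Eq (rep (pow x n)) (rep x)
  | pga3 (x y : PGA I) : Eq (conc (rep x) y) (rep x)
  | pga4 (x y : PGA I) : Eq (rep (conc x y)) (conc x (rep (conc y x)))


/-- A PGA term in which the repetition operator does not occur. -/
def RepFree : PGA I → Prop
  | ins _ => True
  | conc P Q => RepFree P ∧ RepFree Q
  | rep _ => False

end PGA


namespace PGA
variable {I : Type}

/-- `X* = X ; X*`. -/
theorem rep_unfold (x : PGA I) : Eq (rep x) (conc x (rep x)) := by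
  have h2 : Eq (rep (conc x x)) (rep x) := Eq.pga2 x 2 (by norm_num)
  exact (h2.symm.trans ((Eq.pga4 x x).trans (Eq.concCongr (Eq.refl x)
    ((Eq.repCongr (Eq.refl _)).trans h2))))

/-- `(X*)* = X*`. -/
theorem rep_rep (x : PGA I) : Eq (rep (rep x)) (rep x) := by
  exact (rep_unfold (rep x)).trans (Eq.pga3 _ _)

end PGA
/-- First canonical form: every closed PGA term is derivably equal, using
PGA1–PGA4, to a term of the form `P` or `P ; Q*` with `P`, `Q` repetition-free. -/
theorem pga_first_canonical_form {I : Type} (P : PGA I) :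
    (∃ Q : PGA I, PGA.RepFree Q ∧ PGA.Eq P Q) ∨
    (∃ Q R : PGA I, PGA.RepFree Q ∧ PGA.RepFree R ∧
      PGA.Eq P (PGA.conc Q (PGA.rep R))) := by
  induction P with
  | ins i => exact Or.inl ⟨PGA.ins i, trivial, PGA.Eq.refl _⟩
  | conc X Y ihX ihY =>
    rcases ihX with ⟨Q, hQ, hXQ⟩ | ⟨Q, R, hQ, hR, hX⟩
    · rcases ihY with ⟨Q', hQ', hYQ⟩ | ⟨Q', R', hQ', hR', hY⟩
      · exact Or.inl ⟨PGA.conc Q Q', ⟨hQ, hQ'⟩, PGA.Eq.concCongr hXQ hYQ⟩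
      · exact Or.inr ⟨PGA.conc Q Q', R', ⟨hQ, hQ'⟩, hR',
          (PGA.Eq.concCongr hXQ hY).trans (PGA.Eq.pga1 _ _ _).symm⟩
    · refine Or.inr ⟨Q, R, hQ, hR, ?_⟩
      exact (PGA.Eq.concCongr hX (PGA.Eq.refl Y)).trans
        ((PGA.Eq.pga1 _ _ _).trans (PGA.Eq.concCongr (PGA.Eq.refl Q) (PGA.Eq.pga3 _ _)))
  | rep X ihX =>
    rcases ihX with ⟨Q, hQ, hXQ⟩ | ⟨Q, R, hQ, hR, hX⟩
    · exact Or.inr ⟨Q, Q, hQ, hQ, (PGA.Eq.repCongr hXQ).trans (PGA.rep_unfold Q)⟩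
    · refine Or.inr ⟨Q, R, hQ, hR, ?_⟩
      exact (PGA.Eq.repCongr hX).trans ((PGA.Eq.pga4 _ _).trans
        (PGA.Eq.concCongr (PGA.Eq.refl Q)
          ((PGA.Eq.repCongr (PGA.Eq.pga3 _ _)).trans (PGA.rep_rep R))))
end

section
/- Given a finite linear recursive specification E over ACPτ whose equations are X_i = e_{i1}·X_{i1} + … + e_{ik_i}·X_{ik_i} + e'_{i1} + … + e'_{il_i} with all actions in AA, the linear recursive specification E' over BTApcspc with equations X_i = ac(e_{i1},…,e_{ik_i},e'_{i1},…,e'_{il_i})[k_i+l_i](X_{i1},…,X_{ik_i},S,…,S) (with l_i copies of S) satisfies ⌈⟨X|E'⟩⌉ = ⟨X|E⟩ for all variables X of E. -/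
/-- A model of basic thread algebra with postconditional switching (BTApcs) over
a set `A` of basic actions.  Actions are elements of `Option A`, with `none`
standing for the internal action `τ`.  `pcc a x y` interprets postconditional
composition `x ⊴ a ⊵ y` and `switch a k xs` interprets the `k`-ary
postconditional switch `a[k](x₁,…,x_k)`. -/
structure ThreadModel (A : Type) where
  Thr : Type
  D : Thr
  S : Thr
  pcc : Option A → Thr → Thr → Thr
  switch : Option A → (k : ℕ) → (Fin k → Thr) → Thr

namespace ThreadModel

variable {A : Type} (M : ThreadModel A)

/-- `M.Res p q` : `q` is a state (residual thread) of `p`; the least relation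
with `p ∈ Res(p)` that is closed under taking components of postconditional
compositions and switches occurring in `Res(p)`. -/
inductive Res : M.Thr → M.Thr → Prop
  | refl (p : M.Thr) : Res p p
  | pccL {p : M.Thr} {a : Option A} {q r : M.Thr} :
      Res p (M.pcc a q r) → Res p q
  | pccR {p : M.Thr} {a : Option A} {q r : M.Thr} :
      Res p (M.pcc a q r) → Res p r
  | sw {p : M.Thr} {a : Option A} {k : ℕ} {ps : Fin k → M.Thr} (i : Fin k) :
      Res p (M.switch a k ps) → Res p (ps i)

/-- A thread `p` is regular over a set `B'` of actions if its set of residual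
threads is finite and every postconditional composition or switch among its
residual threads uses only actions from `B'`. -/
def RegularOver (p : M.Thr) (B' : Set (Option A)) : Prop :=
  {q | M.Res p q}.Finite ∧
  (∀ (a : Option A) (q r : M.Thr), M.Res p q → M.Res p r →
      M.Res p (M.pcc a q r) → a ∈ B') ∧
  (∀ (a : Option A) (k : ℕ) (ps : Fin k → M.Thr), (∀ i, M.Res p (ps i)) →
      M.Res p (M.switch a k ps) → a ∈ B')

end ThreadModel

/-- Right-hand sides of a linear recursive specification over BTApcs with
variables `X_0, …, X_{m-1}`: each right-hand side is `D`, `S`, a postconditional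
composition `Y ⊴ a ⊵ Z` of variables, or a postconditional switch
`a[k](X₁,…,X_k)` of variables. -/
inductive LinRHS (A : Type) (m : ℕ) : Type
  | D : LinRHS A m
  | S : LinRHS A m
  | pcc (a : Option A) (i j : Fin m) : LinRHS A m
  | switch (a : Option A) (k : ℕ) (f : Fin k → Fin m) : LinRHS A m

/-- Evaluation of a linear right-hand side in a thread model under an assignment
of threads to the variables. -/
def LinRHS.eval {A : Type} {m : ℕ} (M : ThreadModel A)
    (sol : Fin m → M.Thr) : LinRHS A m → M.Thr
  | .D => M.D
  | .S => M.S
  | .pcc a i j => M.pcc a (sol i) (sol j)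
  | .switch a k f => M.switch a k fun i => sol (f i)

/-- The set of basic actions occurring in a linear right-hand side. -/
def LinRHS.acts {A : Type} {m : ℕ} : LinRHS A m → Set (Option A)
  | .pcc a _ _ => {a}
  | .switch a _ _ => {a}
  | _ => ∅

/-- `sol` is a solution of the finite linear recursive specification `E`. -/
def IsSolution {A : Type} {m : ℕ} (M : ThreadModel A)
    (E : Fin m → LinRHS A m) (sol : Fin m → M.Thr) : Prop :=
  ∀ i, sol i = (E i).eval M sol

/-- A model of ACP with abstraction (ACPτ) over a set `A` of atomic actions,
restricted to the constants and operators needed here.  `atom` interprets the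
atomic action constants, with `atom none` the silent step `τ`; `delta` is
deadlock `δ`; `alt` is alternative composition `+` and `seq` is sequential
composition `·`. -/
structure ProcModel (A : Type) where
  Proc : Type
  atom : Option A → Proc
  delta : Proc
  alt : Proc → Proc → Proc
  seq : Proc → Proc → Proc

namespace ProcModel

variable {A : Type} (N : ProcModel A)

/-- `N.Sub p q` : `q` is a state (subprocess) of `p`; the least relation with
`p ∈ Sub(p)` that is closed under: if `e·q ∈ Sub(p)` then `q ∈ Sub(p)`, and if
`e·q + r ∈ Sub(p)` then `q ∈ Sub(p)`. -/
inductive Sub : N.Proc → N.Proc → Prop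
  | refl (p : N.Proc) : Sub p p
  | seqStep {p : N.Proc} {e : Option A} {q : N.Proc} :
      Sub p (N.seq (N.atom e) q) → Sub p q
  | altStep {p : N.Proc} {e : Option A} {q r : N.Proc} :
      Sub p (N.alt (N.seq (N.atom e) q) r) → Sub p q

/-- A process `p` is regular over a set `A'` of actions if its set of
subprocesses is finite and the actions occurring in these decompositions all
belong to `A'`. -/
def RegularOver (p : N.Proc) (A' : Set (Option A)) : Prop :=
  {q | N.Sub p q}.Finite ∧
  (∀ (e : Option A) (q : N.Proc), N.Sub p q →
      N.Sub p (N.seq (N.atom e) q) → e ∈ A') ∧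
  (∀ (e : Option A) (q r : N.Proc), N.Sub p q → N.Sub p r →
      N.Sub p (N.alt (N.seq (N.atom e) q) r) → e ∈ A')

end ProcModel

/-- Linear ACPτ terms over variables `X_0, …, X_{m-1}`: built by alternative
composition from `δ`, atomic actions `e`, and prefixes `e · X`. -/
inductive PLin (A : Type) (m : ℕ) : Type
  | delta : PLin A m
  | atom (e : Option A) : PLin A m
  | pre (e : Option A) (X : Fin m) : PLin A m
  | alt (t u : PLin A m) : PLin A m

/-- Evaluation of a linear term in a process model under an assignment of
processes to the variables. -/
def PLin.eval {A : Type} {m : ℕ} (N : ProcModel A)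
    (sol : Fin m → N.Proc) : PLin A m → N.Proc
  | .delta => N.delta
  | .atom e => N.atom e
  | .pre e X => N.seq (N.atom e) (sol X)
  | .alt t u => N.alt (t.eval N sol) (u.eval N sol)

/-- The set of atomic actions occurring in a linear term. -/
def PLin.acts {A : Type} {m : ℕ} : PLin A m → Set (Option A)
  | .delta => ∅
  | .atom e => {e}
  | .pre e _ => {e}
  | .alt t u => t.acts ∪ u.acts

/-- `sol` is a solution of the finite linear recursive specification `E` over
ACPτ. -/
def IsPSolution {A : Type} {m : ℕ} (N : ProcModel A)
    (E : Fin m → PLin A m) (sol : Fin m → N.Proc) : Prop :=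
  ∀ i, sol i = (E i).eval N sol

/-- Basic instructions / basic actions of PGAmrpc and BTApcspc: either a
program–service (thread–service) interaction instruction `f.m` with focus `f`
and method `m`, or a process construction instruction `ac(e₁,…,e_n)` given by a
list of atomic actions from `AA` (here: elements of the type `E`). -/
abbrev BInstr (F Mth E : Type) : Type := (F × Mth) ⊕ (List E)

/-- Atomic actions of the ACPτ model used for process extraction: the atomic
actions `AA` (elements of `E`) together with the special internal atomic action
`i` (`Sum.inr ()`). -/
abbrev PAtom (E : Type) : Type := E ⊕ Unit

/-- Alternative composition of a list of processes (with `δ` for the empty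
list). -/
def ProcModel.bigAlt {A : Type} (N : ProcModel A) (l : List N.Proc) : N.Proc :=
  l.foldr N.alt N.delta

/-- Some laws of ACPτ that hold in any of its models: commutativity,
associativity of `+`, the axiom `x + δ = x`, and the law `x · τ = x`. -/
structure ProcModel.ACPLaws {A : Type} (N : ProcModel A) : Prop where
  altComm : ∀ x y, N.alt x y = N.alt y x
  altAssoc : ∀ x y z, N.alt (N.alt x y) z = N.alt x (N.alt y z)
  altDelta : ∀ x, N.alt x N.delta = x
  seqTau : ∀ x, N.seq x (N.atom none) = x

/-- The process extraction operation `⌈_⌉` from threads of a model `M` of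
BTApcspc to processes of a model `N` of ACPτ, packaged with its defining
equations on the relevant constants and operators (`⌈S⌉` is the abstraction of
the special termination action, i.e. `τ`; `⌈D⌉ = i·δ`; postconditional
compositions and switches over `τ` and over process construction actions are
translated as in the defining table, padding with `i·δ` or truncating as
needed). -/
structure ProcExtraction (F Mth E : Type) (M : ThreadModel (BInstr F Mth E))
    (N : ProcModel (PAtom E)) where
  pextr : M.Thr → N.Proc
  eq_S : pextr M.S = N.atom none
  eq_D : pextr M.D = N.seq (N.atom (some (Sum.inr ()))) N.delta
  eq_pcc_tau : ∀ x y : M.Thr,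
      pextr (M.pcc none x y) =
        N.seq (N.atom (some (Sum.inr ())))
          (N.seq (N.atom (some (Sum.inr ()))) (pextr x))
  eq_pcc_ac : ∀ (es : List E) (x y : M.Thr),
      pextr (M.pcc (some (Sum.inr es)) x y) =
        N.bigAlt (es.mapIdx fun j e =>
          N.seq (N.atom (some (Sum.inl e))) (if j = 0 then pextr x else pextr y))
  eq_switch_tau : ∀ (k : ℕ) (h : 0 < k) (ts : Fin k → M.Thr),
      pextr (M.switch none k ts) =
        N.seq (N.atom (some (Sum.inr ())))
          (N.seq (N.atom (some (Sum.inr ()))) (pextr (ts ⟨0, h⟩)))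
  eq_switch_ac : ∀ (es : List E) (k : ℕ) (ts : Fin k → M.Thr),
      pextr (M.switch (some (Sum.inr es)) k ts) =
        N.bigAlt (es.mapIdx fun j e =>
          N.seq (N.atom (some (Sum.inl e)))
            (if h : j < k then pextr (ts ⟨j, h⟩)
             else N.seq (N.atom (some (Sum.inr ()))) N.delta))

/-!
The extraction of `ac(e₁,…,e_k,e'₁,…,e'_l)[k+l](t₁,…,t_k,S,…,S)` is
`e₁·⌈t₁⌉ + … + e_k·⌈t_k⌉ + e'₁·τ + … + e'_l·τ`, and `x·τ = x` turns the last `l` summands into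
`e'₁ + … + e'_l`. Hence `⌈_⌉` maps a solution of `E'` to a solution of `E`, which by uniqueness
is `⟨X|E⟩`.
-/

theorem List.mapIdx_ofFn {α β : Type*} {m : ℕ} (f : ℕ → α → β) (g : Fin m → α) :
    (List.ofFn g).mapIdx f = List.ofFn fun j : Fin m => f j (g j) :=
  List.ext_getElem (by simp) fun _ _ _ => by simp

namespace ProcExtraction

variable {F Mth E : Type} {M : ThreadModel (BInstr F Mth E)} {N : ProcModel (PAtom E)}
  (pext : ProcExtraction F Mth E M N)

theorem pextr_switch_ofFn_append_S (hτ : ∀ x, N.seq x (N.atom none) = x)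
    {k l : ℕ} (es : Fin k → E) (es' : Fin l → E) (ts : Fin k → M.Thr) :
    pext.pextr (M.switch (some (Sum.inr (List.ofFn es ++ List.ofFn es'))) (k + l)
        fun j => if h : (j : ℕ) < k then ts ⟨j, h⟩ else M.S) =
      N.bigAlt
        ((List.ofFn fun j => N.seq (N.atom (some (Sum.inl (es j)))) (pext.pextr (ts j))) ++
          List.ofFn fun j => N.atom (some (Sum.inl (es' j)))) := by
  rw [pext.eq_switch_ac, List.mapIdx_append, List.mapIdx_ofFn, List.mapIdx_ofFn,
    List.length_ofFn]
  congr 2 <;> congr 1 <;> funext j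
  · simp [Nat.lt_add_right l j.isLt]
  · simp [pext.eq_S, hτ, Nat.add_comm k l, j.isLt]

end ProcExtraction

theorem pextr_of_translated_spec_is_solution_general
    {F Mth E : Type} (M : ThreadModel (BInstr F Mth E))
    (N : ProcModel (PAtom E)) (hN : N.ACPLaws)
    (pext : ProcExtraction F Mth E M N)
    (n : ℕ) (k l : Fin n → ℕ)
    (e : ∀ i : Fin n, Fin (k i) → E) (tgt : ∀ i : Fin n, Fin (k i) → Fin n)
    (ex : ∀ i : Fin n, Fin (l i) → E)
    (solP : Fin n → N.Proc)
    -- `E` has a unique solution: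
    (hUniqueP : ∀ solP' : Fin n → N.Proc,
      (∀ i, solP' i =
        N.bigAlt
          ((List.ofFn fun j : Fin (k i) =>
              N.seq (N.atom (some (Sum.inl (e i j)))) (solP' (tgt i j))) ++
           (List.ofFn fun j : Fin (l i) => N.atom (some (Sum.inl (ex i j)))))) →
      solP' = solP)
    -- `solT` is a solution of the translated specification `E'` over BTApcspc:
    (solT : Fin n → M.Thr)
    (hsolT : ∀ i, solT i =
      M.switch (some (Sum.inr (List.ofFn (e i) ++ List.ofFn (ex i))))
        (k i + l i)
        (fun j => if h : (j : ℕ) < k i then solT (tgt i ⟨j, h⟩) else M.S)) :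
    ∀ i, pext.pextr (solT i) = solP i := by
  have extracted_is_solution : ∀ i, pext.pextr (solT i) =
      N.bigAlt
        ((List.ofFn fun j : Fin (k i) =>
            N.seq (N.atom (some (Sum.inl (e i j)))) (pext.pextr (solT (tgt i j)))) ++
         (List.ofFn fun j : Fin (l i) => N.atom (some (Sum.inl (ex i j))))) := fun i => by
    rw [hsolT i]
    exact pext.pextr_switch_ofFn_append_S hN.seqTau (e i) (ex i) fun j => solT (tgt i j)
  exact congrFun (hUniqueP _ extracted_is_solution)

/-- Translating a finite linear ACPτ specification
`X_i = e_{i1}·X_{i1} + … + e_{ik_i}·X_{ik_i} + e'_{i1} + … + e'_{il_i}`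
into the BTApcspc specification
`X_i = ac(e_{i1},…,e_{ik_i},e'_{i1},…,e'_{il_i})[k_i+l_i](X_{i1},…,X_{ik_i},S,…,S)`
(with `l_i` copies of `S`): the process extraction of the solution of the latter
is the solution of the former, `⌈⟨X|E'⟩⌉ = ⟨X|E⟩` for all variables `X`. -/
theorem pextr_of_translated_spec_is_solution
    {F Mth E : Type} (M : ThreadModel (BInstr F Mth E))
    (N : ProcModel (PAtom E)) (hN : N.ACPLaws)
    (pext : ProcExtraction F Mth E M N)
    (n : ℕ) (k l : Fin n → ℕ)
    (e : ∀ i : Fin n, Fin (k i) → E) (tgt : ∀ i : Fin n, Fin (k i) → Fin n)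
    (ex : ∀ i : Fin n, Fin (l i) → E)
    -- `solP` is a solution of `E` over ACPτ:
    (solP : Fin n → N.Proc)
    (hsolP : ∀ i, solP i =
      N.bigAlt
        ((List.ofFn fun j : Fin (k i) =>
            N.seq (N.atom (some (Sum.inl (e i j)))) (solP (tgt i j))) ++
         (List.ofFn fun j : Fin (l i) => N.atom (some (Sum.inl (ex i j))))))
    -- `E` has a unique solution:
    (hUniqueP : ∀ solP' : Fin n → N.Proc,
      (∀ i, solP' i =
        N.bigAlt
          ((List.ofFn fun j : Fin (k i) =>
              N.seq (N.atom (some (Sum.inl (e i j)))) (solP' (tgt i j))) ++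
           (List.ofFn fun j : Fin (l i) => N.atom (some (Sum.inl (ex i j)))))) →
      solP' = solP)
    -- `solT` is a solution of the translated specification `E'` over BTApcspc:
    (solT : Fin n → M.Thr)
    (hsolT : ∀ i, solT i =
      M.switch (some (Sum.inr (List.ofFn (e i) ++ List.ofFn (ex i))))
        (k i + l i)
        (fun j => if h : (j : ℕ) < k i then solT (tgt i ⟨j, h⟩) else M.S)) :
    ∀ i, pext.pextr (solT i) = solP i :=
  pextr_of_translated_spec_is_solution_general M N hN pext n k l e tgt ex solP hUniqueP solT hsolT
end

section
/- Under the assumption H(m) = 1, the translation of use-axiom U5 is derivable in ACPτ with action renaming and guarded recursion: ⌈(x ⊴ f.m ⊵ y) /_f H⌉ = ⌈τ ∘ (x /_f ∂_m H)⌉, where the left-hand side unfolds to ρ_{stop*↦stop}(∂_{{stop, stop̄}}(∂_{A_f}( snd_f(m)·(rcv_f(1)·x + rcv_f(2)·y) ∥ ρ_{R_f}(⟨X_H | E_H⟩) ))) and equals i·i·ρ_{stop*↦stop}(∂_{{stop, stop̄}}(∂_{A_f}( x ∥ ρ_{R_f}(⟨X_{∂_m H} | E_H⟩) ))). -/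
/-- Atomic actions of ACPτ used for process extraction and for the encoding of
services: the actions from `AA` (elements of `E`), the send and receive actions
`snd_f(d)`, `rcv_f(d)` (for `d` a method or a reply), their generic
service-side versions `snd_s(r)`, `rcv_s(m)`, the termination actions `stp`,
`stp̄`, `stp*`, and the internal action `i`. -/
inductive PAct (F Mth E : Type) : Type
  | aa (e : E) : PAct F Mth E
  | snd (f : F) (d : Mth ⊕ ℕ) : PAct F Mth E
  | rcv (f : F) (d : Mth ⊕ ℕ) : PAct F Mth E
  | snds (r : ℕ) : PAct F Mth E
  | rcvs (m : Mth) : PAct F Mth E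
  | stp : PAct F Mth E
  | stpbar : PAct F Mth E
  | stpstar : PAct F Mth E
  | iact : PAct F Mth E

/-- The communication function: `snd_f(d) | rcv_f(d) = i`, `stp | stp̄ = stp*`,
and all other communications are blocked (`δ`, represented by `none`). -/
def gamma {F Mth E : Type} [DecidableEq F] [DecidableEq Mth] :
    PAct F Mth E → PAct F Mth E → Option (PAct F Mth E)
  | .snd f d, .rcv g d' => if f = g ∧ d = d' then some .iact else none
  | .rcv f d, .snd g d' => if f = g ∧ d = d' then some .iact else none
  | .stp, .stpbar => some .stpstar
  | .stpbar, .stp => some .stpstar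
  | _, _ => none

/-- Terms of ACPτ with action renaming and guarded recursion: variables, atomic
actions, `τ`, `δ`, alternative, sequential and parallel composition, left merge,
communication merge, encapsulation `∂_H`, abstraction `τ_I`, action renaming
`ρ_R`, and recursion constants `rec' Es X = ⟨X|Es⟩` for (countably branching)
recursive specifications. -/
inductive APc (F Mth E : Type) : Type
  | var (n : ℕ) : APc F Mth E
  | atom (a : PAct F Mth E) : APc F Mth E
  | tau : APc F Mth E
  | delta : APc F Mth E
  | alt : APc F Mth E → APc F Mth E → APc F Mth E
  | seq : APc F Mth E → APc F Mth E → APc F Mth E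
  | par : APc F Mth E → APc F Mth E → APc F Mth E
  | lm : APc F Mth E → APc F Mth E → APc F Mth E
  | cm : APc F Mth E → APc F Mth E → APc F Mth E
  | encap : Set (PAct F Mth E) → APc F Mth E → APc F Mth E
  | abs : Set (PAct F Mth E) → APc F Mth E → APc F Mth E
  | ren : (PAct F Mth E → PAct F Mth E) → APc F Mth E → APc F Mth E
  | rec' : (ℕ → APc F Mth E) → ℕ → APc F Mth E

namespace APc

variable {F Mth E : Type}

/-- No abstraction operators (and no nested recursion constants) occur. -/
def NoAbs : APc F Mth E → Prop
  | .var _ => True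
  | .atom _ => True
  | .tau => True
  | .delta => True
  | .alt p q => NoAbs p ∧ NoAbs q
  | .seq p q => NoAbs p ∧ NoAbs q
  | .par p q => NoAbs p ∧ NoAbs q
  | .lm p q => NoAbs p ∧ NoAbs q
  | .cm p q => NoAbs p ∧ NoAbs q
  | .encap _ p => NoAbs p
  | .abs _ _ => False
  | .ren _ p => NoAbs p
  | .rec' _ _ => False

/-- Right-hand side of a guarded recursive specification: no abstraction
operators occur and all occurrences of variables are guarded (behind an atomic
action prefix). -/
def PGuarded : APc F Mth E → Prop
  | .var _ => False
  | .atom _ => True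
  | .tau => True
  | .delta => True
  | .alt p q => PGuarded p ∧ PGuarded q
  | .seq (.atom _) q => NoAbs q
  | .seq p q => PGuarded p ∧ PGuarded q
  | _ => False

/-- Substitution of terms for variables (recursion constants are closed and are
left unchanged). -/
def psubst (σ : ℕ → APc F Mth E) : APc F Mth E → APc F Mth E
  | .var n => σ n
  | .atom a => .atom a
  | .tau => .tau
  | .delta => .delta
  | .alt p q => .alt (psubst σ p) (psubst σ q)
  | .seq p q => .seq (psubst σ p) (psubst σ q)
  | .par p q => .par (psubst σ p) (psubst σ q)
  | .lm p q => .lm (psubst σ p) (psubst σ q)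
  | .cm p q => .cm (psubst σ p) (psubst σ q)
  | .encap H p => .encap H (psubst σ p)
  | .abs I p => .abs I (psubst σ p)
  | .ren R p => .ren R (psubst σ p)
  | .rec' Es X => .rec' Es X

/-- Alternative composition of a list of ACPτ terms. -/
def bigAlt (l : List (APc F Mth E)) : APc F Mth E := l.foldr alt delta

variable [DecidableEq F] [DecidableEq Mth]

/-- Equality of ACPτ terms derivable from the axioms of ACPτ with action
renaming and guarded recursion: A1–A7, the axioms for merge, left merge and
communication merge (CM1–CM9 and the `τ`-laws for the merges), the
communication function axiom, the encapsulation axioms D, the abstraction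
axioms TI, the renaming axioms RN, the silent step laws, and RDP, RSP; closed
under equational logic. -/
inductive PEq : APc F Mth E → APc F Mth E → Prop
  | refl (x : APc F Mth E) : PEq x x
  | symm {x y} : PEq x y → PEq y x
  | trans {x y z} : PEq x y → PEq y z → PEq x z
  | altCongr {x x' y y'} : PEq x x' → PEq y y' → PEq (alt x y) (alt x' y')
  | seqCongr {x x' y y'} : PEq x x' → PEq y y' → PEq (seq x y) (seq x' y')
  | parCongr {x x' y y'} : PEq x x' → PEq y y' → PEq (par x y) (par x' y')
  | lmCongr {x x' y y'} : PEq x x' → PEq y y' → PEq (lm x y) (lm x' y')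
  | cmCongr {x x' y y'} : PEq x x' → PEq y y' → PEq (cm x y) (cm x' y')
  | encapCongr (H) {x x'} : PEq x x' → PEq (encap H x) (encap H x')
  | absCongr (I) {x x'} : PEq x x' → PEq (abs I x) (abs I x')
  | renCongr (R) {x x'} : PEq x x' → PEq (ren R x) (ren R x')
  | a1 (x y) : PEq (alt x y) (alt y x)
  | a2 (x y z) : PEq (alt (alt x y) z) (alt x (alt y z))
  | a3 (x) : PEq (alt x x) x
  | a4 (x y z) : PEq (seq (alt x y) z) (alt (seq x z) (seq y z))
  | a5 (x y z) : PEq (seq (seq x y) z) (seq x (seq y z))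
  | a6 (x) : PEq (alt x delta) x
  | a7 (x) : PEq (seq delta x) delta
  | bt1 (x) : PEq (seq x tau) x
  | bt2 (x) : PEq (seq tau x) (alt (seq tau x) x)
  | bt3 (a : PAct F Mth E) (x y) :
      PEq (seq (atom a) (alt (seq tau x) y))
        (alt (seq (atom a) (alt (seq tau x) y)) (seq (atom a) x))
  | cm1 (x y) : PEq (par x y) (alt (alt (lm x y) (lm y x)) (cm x y))
  | cm2 (a : PAct F Mth E) (x) : PEq (lm (atom a) x) (seq (atom a) x)
  | cm2tau (x) : PEq (lm tau x) (seq tau x)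
  | cm2delta (x) : PEq (lm delta x) delta
  | cm3 (a : PAct F Mth E) (x y) :
      PEq (lm (seq (atom a) x) y) (seq (atom a) (par x y))
  | cm3tau (x y) : PEq (lm (seq tau x) y) (seq tau (par x y))
  | cm4 (x y z) : PEq (lm (alt x y) z) (alt (lm x z) (lm y z))
  | cf (a b : PAct F Mth E) :
      PEq (cm (atom a) (atom b))
        (match gamma a b with | some c => atom c | none => delta)
  | cmTauL (x) : PEq (cm tau x) delta
  | cmTauR (x) : PEq (cm x tau) delta
  | cmDeltaL (x) : PEq (cm delta x) delta
  | cmDeltaR (x) : PEq (cm x delta) delta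
  | cm5 (a b : PAct F Mth E) (x) :
      PEq (cm (seq (atom a) x) (atom b)) (seq (cm (atom a) (atom b)) x)
  | cm6 (a b : PAct F Mth E) (x) :
      PEq (cm (atom a) (seq (atom b) x)) (seq (cm (atom a) (atom b)) x)
  | cm7 (a b : PAct F Mth E) (x y) :
      PEq (cm (seq (atom a) x) (seq (atom b) y))
        (seq (cm (atom a) (atom b)) (par x y))
  | cm8 (x y z) : PEq (cm (alt x y) z) (alt (cm x z) (cm y z))
  | cm9 (x y z) : PEq (cm x (alt y z)) (alt (cm x y) (cm x z))
  | d1 (H) (a : PAct F Mth E) (h : a ∉ H) : PEq (encap H (atom a)) (atom a)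
  | d2 (H) (a : PAct F Mth E) (h : a ∈ H) : PEq (encap H (atom a)) delta
  | dTau (H) : PEq (encap H tau) tau
  | dDelta (H) : PEq (encap H delta) delta
  | d3 (H) (x y) : PEq (encap H (alt x y)) (alt (encap H x) (encap H y))
  | d4 (H) (x y) : PEq (encap H (seq x y)) (seq (encap H x) (encap H y))
  | ti1 (I) (a : PAct F Mth E) (h : a ∉ I) : PEq (abs I (atom a)) (atom a)
  | ti2 (I) (a : PAct F Mth E) (h : a ∈ I) : PEq (abs I (atom a)) tau
  | tiTau (I) : PEq (abs I tau) tau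
  | tiDelta (I) : PEq (abs I delta) delta
  | ti3 (I) (x y) : PEq (abs I (alt x y)) (alt (abs I x) (abs I y))
  | ti4 (I) (x y) : PEq (abs I (seq x y)) (seq (abs I x) (abs I y))
  | rn1 (R) (a : PAct F Mth E) : PEq (ren R (atom a)) (atom (R a))
  | rnTau (R) : PEq (ren R tau) tau
  | rnDelta (R) : PEq (ren R delta) delta
  | rn3 (R) (x y) : PEq (ren R (alt x y)) (alt (ren R x) (ren R y))
  | rn4 (R) (x y) : PEq (ren R (seq x y)) (seq (ren R x) (ren R y))
  | rdp (Es : ℕ → APc F Mth E) (X : ℕ) (hG : ∀ n, PGuarded (Es n)) :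
      PEq (rec' Es X) (psubst (fun n => rec' Es n) (Es X))
  | rsp (Es : ℕ → APc F Mth E) (hG : ∀ n, PGuarded (Es n))
      (sol : ℕ → APc F Mth E) :
      (∀ n, PEq (sol n) (psubst sol (Es n))) → ∀ X, PEq (sol X) (rec' Es X)

end APc

set_option linter.unusedSectionVars false

namespace APc

variable {F Mth E : Type} [DecidableEq F] [DecidableEq Mth]

instance : Trans (PEq (F := F) (Mth := Mth) (E := E)) PEq PEq := ⟨PEq.trans⟩

theorem PEq.altDeltaL (x : APc F Mth E) : PEq (alt delta x) x :=
  (PEq.a1 _ _).trans (PEq.a6 _)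

theorem PEq.seqDeltaOf {x : APc F Mth E} (h : PEq x delta) (y : APc F Mth E) :
    PEq (seq x y) delta :=
  (PEq.seqCongr h (PEq.refl y)).trans (PEq.a7 y)

theorem PEq.encapDeltaOf (H : Set (PAct F Mth E)) {x : APc F Mth E}
    (h : PEq x delta) : PEq (encap H x) delta :=
  (PEq.encapCongr H h).trans (PEq.dDelta H)

theorem PEq.encapSeqAtomMem (H : Set (PAct F Mth E)) {a : PAct F Mth E}
    (ha : a ∈ H) (x : APc F Mth E) :
    PEq (encap H (seq (atom a) x)) delta :=
  (PEq.d4 H _ _).trans (PEq.seqDeltaOf (PEq.d2 H a ha) _)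

theorem PEq.encapSeqAtomNotMem (H : Set (PAct F Mth E)) {a : PAct F Mth E}
    (ha : a ∉ H) (x : APc F Mth E) :
    PEq (encap H (seq (atom a) x)) (seq (atom a) (encap H x)) :=
  (PEq.d4 H _ _).trans (PEq.seqCongr (PEq.d1 H a ha) (PEq.refl _))

theorem PEq.renSeqAtom (R : PAct F Mth E → PAct F Mth E) (a : PAct F Mth E)
    (x : APc F Mth E) :
    PEq (ren R (seq (atom a) x)) (seq (atom (R a)) (ren R x)) :=
  (PEq.rn4 R _ _).trans (PEq.seqCongr (PEq.rn1 R a) (PEq.refl _))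

theorem PEq.cfSome {a b c : PAct F Mth E} (h : gamma a b = some c) :
    PEq (cm (atom a) (atom b)) (atom c) := by
  have h' := PEq.cf (E := E) a b
  rw [h] at h'
  exact h'

theorem PEq.cfNone {a b : PAct F Mth E} (h : gamma a b = none) :
    PEq (cm (atom a) (atom b)) delta := by
  have h' := PEq.cf (E := E) a b
  rw [h] at h'
  exact h'

theorem bigAlt_nil : bigAlt ([] : List (APc F Mth E)) = delta := rfl

theorem bigAlt_cons (x : APc F Mth E) (l : List (APc F Mth E)) :
    bigAlt (x :: l) = alt x (bigAlt l) := rfl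

theorem PEq.bigAltCongr : ∀ {l l' : List (APc F Mth E)},
    List.Forall₂ PEq l l' → PEq (bigAlt l) (bigAlt l')
  | _, _, .nil => PEq.refl _
  | _, _, .cons h hs => PEq.altCongr h (PEq.bigAltCongr hs)

theorem PEq.bigAltMapCongr {α : Type*} {l : List α} {g g' : α → APc F Mth E}
    (h : ∀ x ∈ l, PEq (g x) (g' x)) :
    PEq (bigAlt (l.map g)) (bigAlt (l.map g')) := by
  induction l with
  | nil => exact PEq.refl _
  | cons a l ih =>
      exact PEq.altCongr (h a (by simp)) (ih fun x hx => h x (by simp [hx]))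

theorem PEq.bigAltDelta {l : List (APc F Mth E)}
    (h : ∀ x ∈ l, PEq x delta) : PEq (bigAlt l) delta := by
  induction l with
  | nil => exact PEq.refl _
  | cons a l ih =>
      exact (PEq.altCongr (h a (by simp))
        (ih fun x hx => h x (by simp [hx]))).trans (PEq.a6 _)

theorem PEq.bigAltAppend (l₁ l₂ : List (APc F Mth E)) :
    PEq (bigAlt (l₁ ++ l₂)) (alt (bigAlt l₁) (bigAlt l₂)) := by
  induction l₁ with
  | nil => exact (PEq.altDeltaL _).symm
  | cons a l ih =>
      exact (PEq.altCongr (PEq.refl a) ih).trans (PEq.a2 _ _ _).symm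

theorem PEq.lmBigAlt (l : List (APc F Mth E)) (z : APc F Mth E) :
    PEq (lm (bigAlt l) z) (bigAlt (l.map (lm · z))) := by
  induction l with
  | nil => exact PEq.cm2delta z
  | cons a l ih => exact (PEq.cm4 _ _ _).trans (PEq.altCongr (PEq.refl _) ih)

theorem PEq.cmBigAltR (x : APc F Mth E) (l : List (APc F Mth E)) :
    PEq (cm x (bigAlt l)) (bigAlt (l.map (cm x ·))) := by
  induction l with
  | nil => exact PEq.cmDeltaR x
  | cons a l ih => exact (PEq.cm9 _ _ _).trans (PEq.altCongr (PEq.refl _) ih)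

theorem PEq.encapBigAlt (H : Set (PAct F Mth E)) (l : List (APc F Mth E)) :
    PEq (encap H (bigAlt l)) (bigAlt (l.map (encap H))) := by
  induction l with
  | nil => exact PEq.dDelta H
  | cons a l ih => exact (PEq.d3 H _ _).trans (PEq.altCongr (PEq.refl _) ih)

theorem PEq.renBigAlt (R : PAct F Mth E → PAct F Mth E)
    (l : List (APc F Mth E)) :
    PEq (ren R (bigAlt l)) (bigAlt (l.map (ren R))) := by
  induction l with
  | nil => exact PEq.rnDelta R
  | cons a l ih => exact (PEq.rn3 R _ _).trans (PEq.altCongr (PEq.refl _) ih)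

theorem psubst_bigAlt (σ : ℕ → APc F Mth E) (l : List (APc F Mth E)) :
    psubst σ (bigAlt l) = bigAlt (l.map (psubst σ)) := by
  induction l with
  | nil => rfl
  | cons a l ih =>
      rw [bigAlt_cons, List.map_cons, bigAlt_cons,
        show psubst σ (alt a (bigAlt l)) = alt (psubst σ a) (psubst σ (bigAlt l))
          from rfl, ih]

theorem PEq.bigAltSingle {α : Type*} {l : List α} {g : α → APc F Mth E} {m : α}
    {t : APc F Mth E} (hm : m ∈ l) (hnd : l.Nodup) (hgm : PEq (g m) t)
    (hδ : ∀ m' ∈ l, m' ≠ m → PEq (g m') delta) :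
    PEq (bigAlt (l.map g)) t := by
  induction l with
  | nil => cases hm
  | cons a l ih =>
      rcases List.mem_cons.mp hm with rfl | hm'
      · have hl : PEq (bigAlt (l.map g)) delta := by
          apply PEq.bigAltDelta
          intro x hx
          rcases List.mem_map.mp hx with ⟨m', hm', rfl⟩
          exact hδ m' (by simp [hm'])
            (fun h => (List.nodup_cons.mp hnd).1 (h ▸ hm'))
        exact (PEq.altCongr hgm hl).trans (PEq.a6 _)
      · have ha : a ≠ m := fun h => (List.nodup_cons.mp hnd).1 (h ▸ hm')
        have hrest := ih hm' (List.nodup_cons.mp hnd).2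
          (fun m' h' hne => hδ m' (by simp [h']) hne)
        exact (PEq.altCongr (hδ a (by simp) ha) hrest).trans (PEq.altDeltaL t)

theorem pguarded_bigAlt {l : List (APc F Mth E)} (h : ∀ x ∈ l, PGuarded x) :
    PGuarded (bigAlt l) := by
  induction l with
  | nil => trivial
  | cons a l ih => exact ⟨h a (by simp), ih fun x hx => h x (by simp [hx])⟩

end APc

section Service

variable {F Mth E Srv : Type} [DecidableEq F] [DecidableEq Mth]
  [Fintype Mth] [Encodable Mth]

/-- Encoding of spec variables: the variables of `E_H` are indexed by the
services derivable from `H`, represented by the sequences of methods processed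
so far. -/
def encVar (ms : List Mth) : ℕ := Encodable.encode ms

/-- The guarded recursive specification `E_H` encoding a service `H`
(represented coalgebraically by `reply` and `der`): for each derivable service
`H' = ∂_{m₁}…∂_{m_j} H` a variable `X_{H'}` with equation
`X_{H'} = Σ_{m ∈ Meth} rcv_s(m) · snd_s(H'(m)) · X_{∂_m H'} + stp̄`. -/
noncomputable def EH (reply : Srv → Mth → ℕ) (der : Srv → Mth → Srv) (H : Srv) :
    ℕ → APc F Mth E := fun n =>
  match Encodable.decode (α := List Mth) n with
  | some ms =>
      APc.bigAlt
        (((Finset.univ : Finset Mth).toList.map fun m =>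
            APc.seq (.atom (.rcvs m))
              (APc.seq (.atom (.snds (reply (ms.foldl der H) m)))
                (.var (encVar (ms ++ [m]))))) ++
          [APc.atom .stpbar])
  | none => APc.delta

/-- The set `A_f` of send and receive actions at focus `f`. -/
def Af (f : F) : Set (PAct F Mth E) :=
  {a | (∃ d, a = .snd f d) ∨ (∃ d, a = .rcv f d)}

/-- The renaming `stp* ↦ stp`. -/
def Rstar : PAct F Mth E → PAct F Mth E := fun a =>
  match a with
  | .stpstar => .stp
  | a => a

/-- The renaming `R_f`: `snd_s(r) ↦ snd_f(r)` and `rcv_s(m) ↦ rcv_f(m)`. -/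
def Rf (f : F) : PAct F Mth E → PAct F Mth E := fun a =>
  match a with
  | .snds r => .snd f (Sum.inr r)
  | .rcvs m => .rcv f (Sum.inl m)
  | a => a

open APc in
theorem EH_guarded (reply : Srv → Mth → ℕ) (der : Srv → Mth → Srv) (H : Srv) :
    ∀ n, PGuarded ((EH reply der H : ℕ → APc F Mth E) n) := by
  intro n
  unfold EH
  cases Encodable.decode (α := List Mth) n with
  | none => trivial
  | some ms =>
      apply pguarded_bigAlt
      intro x hx
      rcases List.mem_append.mp hx with hx | hx
      · rcases List.mem_map.mp hx with ⟨m', _, rfl⟩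
        exact ⟨trivial, trivial⟩
      · rw [List.mem_singleton.mp hx]
        trivial

theorem EH_encVar (reply : Srv → Mth → ℕ) (der : Srv → Mth → Srv) (H : Srv)
    (ms : List Mth) :
    (EH reply der H : ℕ → APc F Mth E) (encVar ms) =
      APc.bigAlt
        (((Finset.univ : Finset Mth).toList.map fun m =>
            APc.seq (.atom (.rcvs m))
              (APc.seq (.atom (.snds (reply (ms.foldl der H) m)))
                (.var (encVar (ms ++ [m]))))) ++
          [APc.atom .stpbar]) := by
  simp [EH, encVar, Encodable.encodek]

open APc in
theorem EH_unfold (reply : Srv → Mth → ℕ) (der : Srv → Mth → Srv) (H : Srv)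
    (ms : List Mth) :
    PEq (rec' (EH reply der H : ℕ → APc F Mth E) (encVar ms))
      (bigAlt
        (((Finset.univ : Finset Mth).toList.map fun m' =>
            seq (.atom (.rcvs m'))
              (seq (.atom (.snds (reply (ms.foldl der H) m')))
                (rec' (EH reply der H) (encVar (ms ++ [m']))))) ++
          [APc.atom .stpbar])) := by
  have h := PEq.rdp (EH reply der H : ℕ → APc F Mth E) (encVar ms)
    (EH_guarded reply der H)
  rw [EH_encVar, psubst_bigAlt, List.map_append, List.map_map] at h
  exact h

/-- The composed operator `∂_{{stp,stp̄}} ∘ ∂_{A_f}`. -/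
def Dop (f : F) (z : APc F Mth E) : APc F Mth E :=
  APc.encap {PAct.stp, PAct.stpbar} (APc.encap (Af f) z)

namespace Dop

open APc

theorem congr' {f : F} {x y : APc F Mth E} (h : PEq x y) :
    PEq (Dop f x) (Dop f y) := PEq.encapCongr _ (PEq.encapCongr _ h)

theorem altD (f : F) (x y : APc F Mth E) :
    PEq (Dop f (alt x y)) (alt (Dop f x) (Dop f y)) :=
  (PEq.encapCongr _ (PEq.d3 _ _ _)).trans (PEq.d3 _ _ _)

theorem deltaD (f : F) : PEq (Dop f (delta : APc F Mth E)) delta :=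
  (PEq.encapCongr _ (PEq.dDelta _)).trans (PEq.dDelta _)

theorem deltaOf {f : F} {x : APc F Mth E} (h : PEq x delta) :
    PEq (Dop f x) delta := (congr' h).trans (deltaD f)

theorem killAf {f : F} {a : PAct F Mth E} (ha : a ∈ Af f) (x : APc F Mth E) :
    PEq (Dop f (seq (atom a) x)) delta :=
  PEq.encapDeltaOf _ (PEq.encapSeqAtomMem _ ha x)

theorem killS2 {f : F} {a : PAct F Mth E} (h1 : a ∉ Af f)
    (h2 : a ∈ ({PAct.stp, PAct.stpbar} : Set (PAct F Mth E)))
    (x : APc F Mth E) :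
    PEq (Dop f (seq (atom a) x)) delta :=
  (PEq.encapCongr _ (PEq.encapSeqAtomNotMem _ h1 x)).trans
    (PEq.encapSeqAtomMem _ h2 _)

theorem free {f : F} {a : PAct F Mth E} (h1 : a ∉ Af f)
    (h2 : a ∉ ({PAct.stp, PAct.stpbar} : Set (PAct F Mth E)))
    (x : APc F Mth E) :
    PEq (Dop f (seq (atom a) x)) (seq (atom a) (Dop f x)) :=
  (PEq.encapCongr _ (PEq.encapSeqAtomNotMem _ h1 x)).trans
    (PEq.encapSeqAtomNotMem _ h2 _)

theorem bigAltD (f : F) (l : List (APc F Mth E)) :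
    PEq (Dop f (bigAlt l)) (bigAlt (l.map (Dop f))) := by
  refine (PEq.encapCongr _ (PEq.encapBigAlt _ l)).trans ?_
  refine (PEq.encapBigAlt _ _).trans ?_
  rw [List.map_map]
  exact PEq.refl _

end Dop

/-- Under the assumption `H(m) = 1`, the translation of use-axiom U5 is
derivable in ACPτ with action renaming and guarded recursion:
`⌈(x ⊴ f.m ⊵ y) /_f H⌉`, which unfolds to
`ρ_{stp*↦stp}(∂_{{stp,stp̄}}(∂_{A_f}(snd_f(m)·(rcv_f(1)·x + rcv_f(2)·y) ∥
ρ_{R_f}(⟨X_H|E_H⟩))))`, equals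
`i·i·ρ_{stp*↦stp}(∂_{{stp,stp̄}}(∂_{A_f}(x ∥ ρ_{R_f}(⟨X_{∂_m H}|E_H⟩))))`,
which is `⌈τ ∘ (x /_f ∂_m H)⌉`. -/
theorem u5_translation_derivable
    (reply : Srv → Mth → ℕ) (der : Srv → Mth → Srv) (H : Srv)
    (f : F) (m : Mth) (hm : reply H m = 1) (px py : APc F Mth E) :
    APc.PEq
      (APc.ren Rstar
        (APc.encap {PAct.stp, PAct.stpbar}
          (APc.encap (Af f)
            (APc.par
              (APc.seq (.atom (.snd f (Sum.inl m)))
                (APc.alt (APc.seq (.atom (.rcv f (Sum.inr 1))) px)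
                  (APc.seq (.atom (.rcv f (Sum.inr 2))) py)))
              (APc.ren (Rf f)
                (APc.rec' (EH reply der H) (encVar ([] : List Mth))))))))
      (APc.seq (.atom .iact) (APc.seq (.atom .iact)
        (APc.ren Rstar
          (APc.encap {PAct.stp, PAct.stpbar}
            (APc.encap (Af f)
              (APc.par px
                (APc.ren (Rf f)
                  (APc.rec' (EH reply der H) (encVar [m])))))))))  := by
  classical
  -- abbreviations
  set Es : ℕ → APc F Mth E := EH reply der H with hEsdef
  let a0 : PAct F Mth E := .snd f (Sum.inl m)
  let rc1 : PAct F Mth E := .rcv f (Sum.inr 1)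
  let rc2 : PAct F Mth E := .rcv f (Sum.inr 2)
  let sd1 : PAct F Mth E := .snd f (Sum.inr 1)
  let P : APc F Mth E := .alt (.seq (.atom rc1) px) (.seq (.atom rc2) py)
  let lft : APc F Mth E := .seq (.atom a0) P
  let Q1 : APc F Mth E := .ren (Rf f) (.rec' Es (encVar [m]))
  let s : APc F Mth E := .seq (.atom sd1) Q1
  let hfun : Mth → APc F Mth E := fun m' =>
    .seq (.atom (.rcv f (Sum.inl m')))
      (.seq (.atom (.snd f (Sum.inr (reply H m'))))
        (.ren (Rf f) (.rec' Es (encVar [m']))))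
  let LR : List (APc F Mth E) :=
    ((Finset.univ : Finset Mth).toList.map hfun) ++ [.atom .stpbar]
  -- membership facts
  have mAf_snd : ∀ d, (PAct.snd f d : PAct F Mth E) ∈ Af f :=
    fun d => Or.inl ⟨d, rfl⟩
  have mAf_rcv : ∀ d, (PAct.rcv f d : PAct F Mth E) ∈ Af f :=
    fun d => Or.inr ⟨d, rfl⟩
  have nAf_iact : (PAct.iact : PAct F Mth E) ∉ Af f := by simp [Af]
  have nAf_stpbar : (PAct.stpbar : PAct F Mth E) ∉ Af f := by simp [Af]
  have nS2_iact :
      (PAct.iact : PAct F Mth E) ∉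
        ({PAct.stp, PAct.stpbar} : Set (PAct F Mth E)) := by simp
  have mS2_stpbar :
      (PAct.stpbar : PAct F Mth E) ∈
        ({PAct.stp, PAct.stpbar} : Set (PAct F Mth E)) := by simp
  -- communication facts
  have g1 : gamma (E := E) a0 (.rcv f (Sum.inl m)) = some .iact := by
    simp [gamma, a0]
  have g2 : ∀ m' : Mth, m' ≠ m →
      gamma (E := E) a0 (.rcv f (Sum.inl m')) = none := by
    intro m' hne
    have hne' : ¬ (m = m') := fun h => hne h.symm
    simp [gamma, a0, hne']
  have g3 : gamma (E := E) a0 .stpbar = none := rfl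
  have g4 : gamma (E := E) rc1 sd1 = some .iact := by simp [gamma, rc1, sd1]
  have g5 : gamma (E := E) rc2 sd1 = none := by simp [gamma, rc2, sd1]
  -- unfold the service recursion constant and apply the renaming
  have hr : APc.PEq (APc.ren (Rf f) (APc.rec' Es (encVar ([] : List Mth))))
      (APc.bigAlt LR) := by
    refine (APc.PEq.renCongr _ (EH_unfold reply der H [])).trans ?_
    refine (APc.PEq.renBigAlt _ _).trans ?_
    rw [List.map_append, List.map_map, List.map_cons, List.map_nil]
    refine (APc.PEq.bigAltAppend _ _).trans
      (APc.PEq.trans (APc.PEq.altCongr ?_ ?_) (APc.PEq.bigAltAppend _ _).symm)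
    · refine APc.PEq.bigAltMapCongr fun m' _ => ?_
      exact (APc.PEq.renSeqAtom _ _ _).trans
        (APc.PEq.seqCongr (APc.PEq.refl _) (APc.PEq.renSeqAtom _ _ _))
    · exact APc.PEq.altCongr (APc.PEq.rn1 _ _) (APc.PEq.refl _)
  -- first communication step
  have t1 : APc.PEq (Dop f (APc.lm lft (APc.bigAlt LR))) APc.delta :=
    (Dop.congr' (APc.PEq.cm3 a0 P _)).trans (Dop.killAf (mAf_snd _) _)
  have t2 : APc.PEq (Dop f (APc.lm (APc.bigAlt LR) lft)) APc.delta := by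
    refine (Dop.congr' (APc.PEq.lmBigAlt LR lft)).trans
      ((Dop.bigAltD f _).trans (APc.PEq.bigAltDelta ?_))
    intro x hx
    rcases List.mem_map.mp hx with ⟨z, hz, rfl⟩
    rcases List.mem_map.mp hz with ⟨w, hw, rfl⟩
    rcases List.mem_append.mp hw with hw | hw
    · rcases List.mem_map.mp hw with ⟨m', _, rfl⟩
      exact (Dop.congr' (APc.PEq.cm3 _ _ _)).trans (Dop.killAf (mAf_rcv _) _)
    · rw [List.mem_singleton.mp hw]
      exact (Dop.congr' (APc.PEq.cm2 _ _)).trans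
        (Dop.killS2 nAf_stpbar mS2_stpbar _)
  have t3 : APc.PEq (Dop f (APc.cm lft (APc.bigAlt LR)))
      (APc.seq (.atom .iact) (Dop f (APc.par P s))) := by
    refine (Dop.congr' (APc.PEq.cmBigAltR lft LR)).trans
      ((Dop.bigAltD f _).trans ?_)
    show APc.PEq (APc.bigAlt (List.map (Dop f)
        (List.map (fun z => APc.cm lft z)
          (List.map hfun (Finset.univ : Finset Mth).toList ++
            [APc.atom PAct.stpbar]))))
      (APc.seq (APc.atom PAct.iact) (Dop f (APc.par P s)))
    rw [List.map_append, List.map_cons, List.map_nil, List.map_append,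
      List.map_cons, List.map_nil, List.map_map, List.map_map]
    refine (APc.PEq.bigAltAppend _ _).trans
      (APc.PEq.trans (APc.PEq.altCongr ?_ ?_) (APc.PEq.a6 _))
    · refine APc.PEq.bigAltSingle (m := m)
        (Finset.mem_toList.mpr (Finset.mem_univ m)) (Finset.nodup_toList _)
        ?_ ?_
      · have e : hfun m = APc.seq (APc.atom (PAct.rcv f (Sum.inl m)))
            (APc.seq (APc.atom (PAct.snd f (Sum.inr 1)))
              (APc.ren (Rf f) (APc.rec' Es (encVar [m])))) := by
          show APc.seq _
            (APc.seq (APc.atom (PAct.snd f (Sum.inr (reply H m)))) _) = _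
          rw [hm]
        show APc.PEq (Dop f (APc.cm lft (hfun m)))
          (APc.seq (APc.atom PAct.iact) (Dop f (APc.par P s)))
        rw [e]
        exact (Dop.congr' ((APc.PEq.cm7 a0 _ P _).trans
            (APc.PEq.seqCongr (APc.PEq.cfSome g1) (APc.PEq.refl _)))).trans
          (Dop.free nAf_iact nS2_iact _)
      · intro m' _ hne
        exact Dop.deltaOf ((APc.PEq.cm7 a0 _ P _).trans
          (APc.PEq.seqDeltaOf (APc.PEq.cfNone (g2 m' hne)) _))
    · refine APc.PEq.bigAltDelta fun x hx => ?_
      rw [List.mem_singleton.mp hx]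
      exact Dop.deltaOf ((APc.PEq.cm5 a0 PAct.stpbar P).trans
        (APc.PEq.seqDeltaOf (APc.PEq.cfNone g3) _))
  have key1 : APc.PEq (Dop f (APc.par lft (APc.bigAlt LR)))
      (APc.seq (.atom .iact) (Dop f (APc.par P s))) := by
    refine (Dop.congr' (APc.PEq.cm1 lft (APc.bigAlt LR))).trans ?_
    refine (Dop.altD f _ _).trans ?_
    refine (APc.PEq.altCongr ((Dop.altD f _ _).trans
      ((APc.PEq.altCongr t1 t2).trans (APc.PEq.a6 _))) t3).trans ?_
    exact APc.PEq.altDeltaL _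
  -- second communication step
  have u1 : APc.PEq (Dop f (APc.lm P s)) APc.delta :=
    (Dop.congr' ((APc.PEq.cm4 _ _ _).trans
      (APc.PEq.altCongr (APc.PEq.cm3 rc1 px s) (APc.PEq.cm3 rc2 py s)))).trans
      ((Dop.altD _ _ _).trans ((APc.PEq.altCongr (Dop.killAf (mAf_rcv _) _)
        (Dop.killAf (mAf_rcv _) _)).trans (APc.PEq.a6 _)))
  have u2 : APc.PEq (Dop f (APc.lm s P)) APc.delta :=
    (Dop.congr' (APc.PEq.cm3 sd1 Q1 P)).trans (Dop.killAf (mAf_snd _) _)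
  have u3 : APc.PEq (Dop f (APc.cm P s))
      (APc.seq (.atom .iact) (Dop f (APc.par px Q1))) :=
    (Dop.congr' ((APc.PEq.cm8 _ _ _).trans (APc.PEq.altCongr
      ((APc.PEq.cm7 rc1 sd1 px Q1).trans
        (APc.PEq.seqCongr (APc.PEq.cfSome g4) (APc.PEq.refl _)))
      ((APc.PEq.cm7 rc2 sd1 py Q1).trans
        (APc.PEq.seqDeltaOf (APc.PEq.cfNone g5) _))))).trans
      ((Dop.altD _ _ _).trans ((APc.PEq.altCongr
        (Dop.free nAf_iact nS2_iact _) (Dop.deltaD f)).trans (APc.PEq.a6 _)))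
  have key2 : APc.PEq (Dop f (APc.par P s))
      (APc.seq (.atom .iact) (Dop f (APc.par px Q1))) := by
    refine (Dop.congr' (APc.PEq.cm1 P s)).trans ?_
    refine (Dop.altD f _ _).trans ?_
    refine (APc.PEq.altCongr ((Dop.altD f _ _).trans
      ((APc.PEq.altCongr u1 u2).trans (APc.PEq.a6 _))) u3).trans ?_
    exact APc.PEq.altDeltaL _
  -- assemble
  have hfull : APc.PEq
      (Dop f (APc.par lft (APc.ren (Rf f) (APc.rec' Es (encVar ([] : List Mth))))))
      (APc.seq (.atom .iact) (APc.seq (.atom .iact) (Dop f (APc.par px Q1)))) :=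
    (Dop.congr' (APc.PEq.parCongr (APc.PEq.refl _) hr)).trans
      (key1.trans (APc.PEq.seqCongr (APc.PEq.refl _) key2))
  exact (APc.PEq.renCongr _ hfull).trans ((APc.PEq.renSeqAtom _ _ _).trans
    (APc.PEq.seqCongr (APc.PEq.refl _) (APc.PEq.renSeqAtom _ _ _)))

end Service
end
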